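/- Let Q be an n×n positive definite real symmetric matrix and Φ an n×κ real matrix of full column rank κ ≤ n. Then for every ν > 0 the matrix ν Φ Φ' + Q is invertible, and as ν → ∞, ν Φ' (ν Φ Φ' + Q)^{-1} converges to (Φ' Q^{-1} Φ)^{-1} Φ' Q^{-1}. -/

import Mathlib

/-!
For `ν > 0` the push-through identity
`ν Φ'(νΦΦ' + Q)⁻¹ = (Φ'Q⁻¹Φ + ν⁻¹ I)⁻¹ Φ'Q⁻¹`
removes `ν` from inside the inverse up to a vanishing perturbation. Since `Φ` has full column
rank, `Φ'Q⁻¹Φ` is positive definite, hence invertible, and continuity of matrix inversion at it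
gives the limit.
-/

open Matrix Filter

namespace Matrix

theorem PosDef.isUnit_det {m K : Type*} [Fintype m] [DecidableEq m] [Field K] [PartialOrder K]
    [StarRing K] {M : Matrix m m K} (hM : M.PosDef) : IsUnit M.det :=
  (isUnit_iff_isUnit_det M).mp hM.isUnit

theorem mulVec_injective_of_rank_eq_card {m n K : Type*} [Fintype n] [Field K]
    {A : Matrix m n K} (h : A.rank = Fintype.card n) : Function.Injective A.mulVec :=
  mulVec_injective_iff.mpr <| linearIndependent_iff_card_eq_finrank_span.mpr <| by
    rw [Set.finrank, ← rank_eq_finrank_span_cols, h]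

theorem smul_mul_inv_smul_mul_add {m n K : Type*} [Fintype m] [Fintype n] [DecidableEq m]
    [DecidableEq n] [Field K] (Q : Matrix n n K) (U : Matrix n m K) (V : Matrix m n K)
    {c : K} (hc : c ≠ 0) (hQ : IsUnit Q.det) (hS : IsUnit (c • (U * V) + Q).det)
    (hB : IsUnit (V * Q⁻¹ * U + c⁻¹ • 1).det) :
    c • (V * (c • (U * V) + Q)⁻¹) = (V * Q⁻¹ * U + c⁻¹ • 1)⁻¹ * (V * Q⁻¹) := by
  set B := V * Q⁻¹ * U + c⁻¹ • 1
  set S := c • (U * V) + Q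
  have push : B * (c • V) = V * Q⁻¹ * S := by
    simp only [B, S, Matrix.add_mul, Matrix.mul_add, Matrix.mul_smul, Matrix.smul_mul,
      Matrix.one_mul, smul_add, smul_smul, mul_inv_cancel₀ hc, one_smul, Matrix.mul_assoc,
      nonsing_inv_mul _ hQ, Matrix.mul_one]
  calc c • (V * S⁻¹) = B⁻¹ * (B * (c • V)) * S⁻¹ := by
        rw [← Matrix.mul_assoc, nonsing_inv_mul _ hB, Matrix.one_mul, Matrix.smul_mul]
    _ = B⁻¹ * (V * Q⁻¹) := by
        rw [push, Matrix.mul_assoc, Matrix.mul_assoc, mul_nonsing_inv _ hS, Matrix.mul_one]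

theorem tendsto_add_inv_smul_one_inv {m : Type*} [Fintype m] [DecidableEq m]
    {A : Matrix m m ℝ} (hA : IsUnit A.det) :
    Tendsto (fun ν : ℝ => (A + ν⁻¹ • 1)⁻¹) atTop (nhds A⁻¹) := by
  have hinv : ContinuousAt Inv.inv A :=
    continuousAt_matrix_inv A <| by
      rw [Ring.inverse_eq_inv']
      exact continuousAt_inv₀ hA.ne_zero
  have hpert : Tendsto (fun ν : ℝ => A + ν⁻¹ • (1 : Matrix m m ℝ)) atTop (nhds A) := by
    simpa using tendsto_const_nhds.add
      ((tendsto_inv_atTop_zero (𝕜 := ℝ)).smul_const (1 : Matrix m m ℝ))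
  exact hinv.tendsto.comp hpert

end Matrix

theorem diffuse_prior_limit_d_general
    (n κ : ℕ)
    (Q : Matrix (Fin n) (Fin n) ℝ) (hQ : Q.PosDef)
    (Φ : Matrix (Fin n) (Fin κ) ℝ) (hrank : Φ.rank = κ) :
    (∀ ν : ℝ, 0 < ν →
        IsUnit (ν • (Φ * Φᵀ) + Q).det) ∧
      Tendsto (fun ν : ℝ => ν • (Φᵀ * (ν • (Φ * Φᵀ) + Q)⁻¹))
        atTop (nhds ((Φᵀ * Q⁻¹ * Φ)⁻¹ * Φᵀ * Q⁻¹)) := by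
  have hS : ∀ ν : ℝ, 0 < ν → (ν • (Φ * Φᵀ) + Q).PosDef := fun ν hν => by
    simpa [conjTranspose_eq_transpose_of_trivial] using
      PosDef.posSemidef_add ((posSemidef_self_mul_conjTranspose Φ).smul hν.le) hQ
  have hΦ : Function.Injective Φ.mulVec :=
    mulVec_injective_of_rank_eq_card (by rw [hrank, Fintype.card_fin])
  have hA : (Φᵀ * Q⁻¹ * Φ).PosDef := by
    simpa [conjTranspose_eq_transpose_of_trivial] using hQ.inv.conjTranspose_mul_mul_same hΦ
  refine ⟨fun ν hν => (hS ν hν).isUnit_det, ?_⟩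
  rw [Matrix.mul_assoc]
  refine (((continuous_id.matrix_mul continuous_const).tendsto _).comp
    (tendsto_add_inv_smul_one_inv hA.isUnit_det)).congr' ?_
  filter_upwards [eventually_gt_atTop 0] with ν hν
  have hB : (Φᵀ * Q⁻¹ * Φ + ν⁻¹ • 1).PosDef :=
    hA.add_posSemidef (PosSemidef.one.smul (inv_nonneg.mpr hν.le))
  exact (smul_mul_inv_smul_mul_add Q Φ Φᵀ hν.ne' hQ.isUnit_det (hS ν hν).isUnit_det
    hB.isUnit_det).symm

/-- Diffuse-prior limit: for `Q` positive definite and `Φ` of full column rank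
`κ ≤ n`, the matrix `νΦΦ' + Q` is invertible for every `ν > 0` and
`ν Φ'(νΦΦ' + Q)⁻¹ → (Φ'Q⁻¹Φ)⁻¹ Φ' Q⁻¹` as `ν → ∞`. -/
theorem diffuse_prior_limit_d
    (n κ : ℕ) (hκn : κ ≤ n)
    (Q : Matrix (Fin n) (Fin n) ℝ) (hQ : Q.PosDef)
    (Φ : Matrix (Fin n) (Fin κ) ℝ) (hrank : Φ.rank = κ) :
    (∀ ν : ℝ, 0 < ν →
        IsUnit (ν • (Φ * Φᵀ) + Q).det) ∧
      Tendsto (fun ν : ℝ => ν • (Φᵀ * (ν • (Φ * Φᵀ) + Q)⁻¹))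
        atTop (nhds ((Φᵀ * Q⁻¹ * Φ)⁻¹ * Φᵀ * Q⁻¹)) :=
  diffuse_prior_limit_d_general n κ Q hQ Φ hrank
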